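/- Let F(x) = xᵀMx be a nonsingular quadratic form with symmetric integer matrix M (or half-integer entries off-diagonal), let p be a prime not dividing 2·det(M), and let c ∈ ℤ⁴ satisfy M⁻¹(c) := cᵀM⁻¹c = 0 (as a rational number with p-adic valuation ≥ 0 condition, i.e., cᵀ(adj M)c ≡ 0 identically zero). Then S_{p^t}(c) = S_{p^t}(0) for all t ≥ 0, where S_q(c) = Σ_{a mod q, gcd(a,q)=1} Σ_{b mod q⁴} e_q(aF(b) + c·b). -/

import Mathlib

open Finset

/-- `e_q(x) = exp(2πi x / q)`. -/
noncomputable def eN (q : ℕ) (x : ℤ) : ℂ :=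
  Complex.exp (2 * Real.pi * Complex.I * (x : ℂ) / (q : ℂ))

/-- For a quadratic form `F(b) = bᵀMb`,
`S_q(c) = Σ_{a mod q, (a,q)=1} Σ_{b mod q} e_q(a·F(b) + c·b)`. -/
noncomputable def SexpM (M : Matrix (Fin 4) (Fin 4) ℤ) (q : ℕ) (c : Fin 4 → ℤ) : ℂ :=
  ∑ a ∈ (Finset.range q).filter (fun a => Nat.gcd a q = 1),
    ∑ b ∈ Fintype.piFinset (fun _ : Fin 4 => Finset.range q),
      eN q ((a : ℤ) * (∑ i, ∑ j, M i j * (b i : ℤ) * (b j : ℤ)) + ∑ i, c i * (b i : ℤ))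

/-- `eN` only depends on the residue class mod `q`. -/
lemma eN_congr {q : ℕ} (hq : q ≠ 0) {x y : ℤ} (h : (x : ZMod q) = (y : ZMod q)) :
    eN q x = eN q y := by
  obtain ⟨k, hk⟩ := ((ZMod.intCast_eq_intCast_iff x y q).mp h).dvd
  have hy : (y : ℤ) = x + q * k := by linarith [hk]
  have hqc : (q : ℂ) ≠ 0 := Nat.cast_ne_zero.mpr hq
  have : (2 * Real.pi * Complex.I * (y : ℂ) / (q : ℂ))
      = 2 * Real.pi * Complex.I * (x : ℂ) / (q : ℂ) + (k : ℂ) * (2 * Real.pi * Complex.I) := by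
    have : ((y : ℤ) : ℂ) = ((x : ℤ) : ℂ) + (q : ℂ) * (k : ℂ) := by
      rw [hy]; push_cast; ring
    rw [this]; field_simp
  rw [eN, eN, this, Complex.exp_add, Complex.exp_int_mul_two_pi_mul_I, mul_one]

/-- Double sum of a quadratic form as a dot product. -/
lemma quad_as_dot {R : Type*} [CommRing R] (A : Matrix (Fin 4) (Fin 4) R) (x y : Fin 4 → R) :
    ∑ i, ∑ j, A i j * x i * y j = dotProduct x (A.mulVec y) := by
  simp only [dotProduct, Matrix.mulVec, Finset.mul_sum]
  exact Finset.sum_congr rfl fun i _ => Finset.sum_congr rfl fun j _ => by ring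

/-- The core completion-of-square identity over a commutative ring. -/
lemma core_identity {R : Type*} [CommRing R] (A : Matrix (Fin 4) (Fin 4) R) (hA : A.IsSymm)
    (α d u : R) (hu : u * (2 * α * d) = 1)
    (cc w : Fin 4 → R) (hw : A.mulVec w = d • cc) (h0 : dotProduct cc w = 0)
    (v : Fin 4 → R) :
    α * dotProduct (v + u • w) (A.mulVec (v + u • w))
      = α * dotProduct v (A.mulVec v) + dotProduct cc v := by
  have hsym : ∀ x y : Fin 4 → R,
      dotProduct x (A.mulVec y) = dotProduct y (A.mulVec x) := by
    intro x y
    rw [Matrix.dotProduct_mulVec, ← Matrix.mulVec_transpose, hA.eq, dotProduct_comm]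
  rw [Matrix.mulVec_add, dotProduct_add, add_dotProduct, add_dotProduct,
    hsym (u • w) v]
  rw [Matrix.mulVec_smul, hw]
  simp only [smul_dotProduct, dotProduct_smul, smul_eq_mul]
  rw [dotProduct_comm w cc] at *
  rw [h0]
  have hvc : dotProduct v cc = dotProduct cc v := dotProduct_comm _ _
  rw [hvc]
  linear_combination (dotProduct cc v) * hu

/-- Transport a sum over `piFinset (range q)` to a sum over `Fin 4 → ZMod q`. -/
lemma sum_piFinset_eq_sum_zmod {q : ℕ} [NeZero q] (g : (Fin 4 → ZMod q) → ℂ) :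
    ∑ b ∈ Fintype.piFinset (fun _ : Fin 4 => Finset.range q),
        g (fun i => ((b i : ℕ) : ZMod q))
      = ∑ v : Fin 4 → ZMod q, g v := by
  refine Finset.sum_nbij' (fun b => fun i => ((b i : ℕ) : ZMod q))
    (fun v => fun i => (v i).val) ?_ ?_ ?_ ?_ ?_
  · intro b _; exact Finset.mem_univ _
  · intro v _
    simp only [Fintype.mem_piFinset, Finset.mem_range]
    intro i; exact ZMod.val_lt _
  · intro b hb
    simp only [Fintype.mem_piFinset, Finset.mem_range] at hb
    funext i
    exact ZMod.val_cast_of_lt (hb i)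
  · intro v _
    funext i
    simp [ZMod.natCast_val, ZMod.cast_id]
  · intro b _; rfl

/-- Let `F(x) = xᵀMx` be nonsingular with symmetric integer matrix `M`, let
`p` be a prime not dividing `2·det M`, and suppose `cᵀ·(adj M)·c = 0` (i.e. `M⁻¹(c) = 0`).
Then `S_{p^t}(c) = S_{p^t}(0)` for all `t ≥ 0`. -/
theorem SexpM_eq_SexpM_zero_of_adjugate_isotropic
    (M : Matrix (Fin 4) (Fin 4) ℤ) (hM : M.IsSymm) (hdet : M.det ≠ 0)
    (p : ℕ) (hp : p.Prime) (hpdet : ¬ (p : ℤ) ∣ 2 * M.det)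
    (c : Fin 4 → ℤ) (hc : dotProduct c (M.adjugate.mulVec c) = 0) (t : ℕ) :
    SexpM M (p ^ t) c = SexpM M (p ^ t) (fun _ => 0) := by
  set q : ℕ := p ^ t with hqdef
  have hq0 : q ≠ 0 := pow_ne_zero _ hp.pos.ne'
  haveI : NeZero q := ⟨hq0⟩
  -- the reduction of M mod q
  set f : ℤ →+* ZMod q := Int.castRingHom (ZMod q) with hfdef
  set A : Matrix (Fin 4) (Fin 4) (ZMod q) := M.map f with hAdef
  have hA : A.IsSymm := hM.map f
  set d : ZMod q := ((M.det : ℤ) : ZMod q) with hddef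
  have hdA : A.det = d := by
    rw [hAdef, show M.map ⇑f = f.mapMatrix M from rfl, ← RingHom.map_det]; rfl
  set cc : Fin 4 → ZMod q := fun i => ((c i : ℤ) : ZMod q) with hccdef
  set w : Fin 4 → ZMod q := A.adjugate.mulVec cc with hwdef
  -- A * adj A = d • 1
  have hw : A.mulVec w = d • cc := by
    rw [hwdef, Matrix.mulVec_mulVec, Matrix.mul_adjugate, hdA, Matrix.smul_mulVec,
      Matrix.one_mulVec]
  -- cc ⬝ w = 0 from hc
  have h0 : dotProduct cc w = 0 := by
    have hadj : A.adjugate = (M.adjugate).map f := by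
      rw [hAdef, show M.map ⇑f = f.mapMatrix M from rfl, ← RingHom.map_adjugate]; rfl
    have := congrArg f hc
    rw [map_zero] at this
    rw [hwdef, hadj, ← this]
    simp only [dotProduct, Matrix.mulVec, Matrix.map_apply, map_sum, map_mul]
    rfl
  -- 2 * det M is a unit mod q
  have hunit2d : IsUnit (((2 * M.det : ℤ) : ZMod q)) := by
    have hnd : ¬ p ∣ (2 * M.det).natAbs := by
      rw [← Int.natCast_dvd]; exact hpdet
    have hcop : ((2 * M.det).natAbs).Coprime q := by
      rw [hqdef]
      exact ((Nat.Prime.coprime_iff_not_dvd hp).mpr hnd).symm.pow_right t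
    have : IsUnit (((2 * M.det).natAbs : ℕ) : ZMod q) :=
      (ZMod.isUnit_iff_coprime _ _).mpr hcop
    rcases Int.natAbs_eq (2 * M.det) with h | h
    · rw [h, Int.cast_natCast]; exact this
    · rw [h, Int.cast_neg, Int.cast_natCast]; exact this.neg
  rw [SexpM, SexpM]
  refine Finset.sum_congr rfl fun a ha => ?_
  simp only [Finset.mem_filter, Finset.mem_range] at ha
  have hua : IsUnit ((a : ℕ) : ZMod q) := (ZMod.isUnit_iff_coprime _ _).mpr ha.2
  have hu' : IsUnit (((a : ℕ) : ZMod q) * ((2 * M.det : ℤ) : ZMod q)) := hua.mul hunit2d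
  obtain ⟨u, hu⟩ := hu'.exists_left_inv
  set α : ZMod q := ((a : ℕ) : ZMod q) with hαdef
  have hu2 : u * (2 * α * d) = 1 := by
    rw [← hu]
    congr 1
    rw [hαdef, hddef]
    push_cast
    ring
  set s : Fin 4 → ZMod q := u • w with hsdef
  -- rewrite both inner sums as sums over `Fin 4 → ZMod q`
  have key : ∀ (c' : Fin 4 → ℤ),
      (∑ b ∈ Fintype.piFinset (fun _ : Fin 4 => Finset.range q),
        eN q ((a : ℤ) * (∑ i, ∑ j, M i j * (b i : ℤ) * (b j : ℤ)) + ∑ i, c' i * (b i : ℤ)))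
      = ∑ v : Fin 4 → ZMod q,
          eN q ((a : ℤ) * (∑ i, ∑ j, M i j * ((v i).val : ℤ) * ((v j).val : ℤ))
            + ∑ i, c' i * ((v i).val : ℤ)) := by
    intro c'
    rw [← sum_piFinset_eq_sum_zmod (fun v =>
      eN q ((a : ℤ) * (∑ i, ∑ j, M i j * ((v i).val : ℤ) * ((v j).val : ℤ))
        + ∑ i, c' i * ((v i).val : ℤ)))]
    refine Finset.sum_congr rfl fun b hb => ?_
    simp only [Fintype.mem_piFinset, Finset.mem_range] at hb
    have : ∀ i, ((((b i : ℕ) : ZMod q)).val : ℤ) = ((b i : ℕ) : ℤ) := by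
      intro i; rw [ZMod.val_cast_of_lt (hb i)]
    simp only [this]
  rw [key c, key (fun _ => 0)]
  -- now shift v ↦ v + s on the RHS
  have hcast : ∀ v : Fin 4 → ZMod q, ∀ i, ((((v i).val : ℤ)) : ZMod q) = v i := by
    intro v i
    simp [ZMod.natCast_val, ZMod.cast_id]
  refine Fintype.sum_bijective (fun v => v + s) (Equiv.addRight s).bijective _ _ fun v => ?_
  refine eN_congr hq0 ?_
  push_cast
  simp only [ZMod.natCast_val, ZMod.cast_id, zero_mul, Finset.sum_const_zero, add_zero]
  have hMA : ∀ i j, ((M i j : ℤ) : ZMod q) = A i j := fun i j => rfl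
  have hcc' : ∀ i, ((c i : ℤ) : ZMod q) = cc i := fun i => rfl
  simp only [hMA, hcc']
  rw [quad_as_dot A v v, quad_as_dot A (v + s) (v + s)]
  exact (core_identity A hA α d u hu2 cc w hw h0 v).symm
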